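/- The form τ is quadratic in each of its arguments: for any random variables X₁, X₁′, X₂, ..., Xₙ with finite moments of all orders, 2τ(X₁, X₂,...,Xₙ) + 2τ(X₁′, X₂,...,Xₙ) = τ(X₁ + X₁′, X₂,...,Xₙ) + τ(X₁ − X₁′, X₂,...,Xₙ). -/

import Mathlib

open MeasureTheory ProbabilityTheory
open scoped BigOperators Classical

/-- `P` is a partition of the finite type `α`, presented as a finite set of nonempty blocks
such that every element lies in exactly one block. -/
def IsPartitionOf {α : Type*} [DecidableEq α] [Fintype α] (P : Finset (Finset α)) : Prop :=
  (∅ ∉ P) ∧ ∀ x : α, ∃! B, B ∈ P ∧ x ∈ B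

/-- The finite set of all *diverse* partitions of the multiset `{1,1,2,2,…,n,n}` (ground type
`ι`, each element appearing twice).  A partition of this multiset is diverse if the elements
within each of its blocks are distinct; such partitions are exactly the images of the
partitions of `ι × Bool` (two labelled copies of each element) whose blocks contain at most
one copy of each element. -/
noncomputable def diversePartitions (ι : Type*) [Fintype ι] [DecidableEq ι] :
    Finset (Multiset (Multiset ι)) :=
  (Finset.univ.filter fun P : Finset (Finset (ι × Bool)) =>
      IsPartitionOf P ∧ ∀ B ∈ P, ∀ i : ι, ¬((i, false) ∈ B ∧ (i, true) ∈ B)).image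
    fun P => P.val.map fun B => B.val.map Prod.fst

/-- The number `s(π)` of identical pairs of blocks of a partition `π` (presented as a multiset
of blocks). -/
def numIdenticalPairs {ι : Type*} [DecidableEq ι] (pa : Multiset (Multiset ι)) : ℕ :=
  ∑ b ∈ pa.toFinset, (pa.count b).choose 2

/-- The weight `(-1)^(k-1) (k-2)! / 2^(s π)` of a partition `π` with `k` blocks, appearing in
the expansion of the form `τ`. -/
noncomputable def tauWeight {ι : Type*} [DecidableEq ι] (pa : Multiset (Multiset ι)) : ℝ :=
  (-1 : ℝ) ^ (Multiset.card pa - 1) * (Nat.factorial (Multiset.card pa - 2)) /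
    2 ^ numIdenticalPairs pa

/-- `E[X_B]` for a block `B`: the expectation of the product `∏_{i ∈ B} X i`. -/
noncomputable def blockMoment {Ω ι : Type*} [MeasurableSpace Ω] (μ : Measure Ω)
    (X : ι → Ω → ℝ) (B : Multiset ι) : ℝ :=
  ∫ ω, (B.map fun i => X i ω).prod ∂μ

/-- The form `τ(X₁,…,Xₙ) = ∑_π (-1)^(k-1)(k-2)!/2^(s π) · E[X_{B₁}] ⋯ E[X_{B_k}]`, the sum
running over all diverse partitions `π = (B₁,…,B_k)` of the multiset `{1,1,…,n,n}`. -/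
noncomputable def tauForm {Ω ι : Type*} [MeasurableSpace Ω] [Fintype ι] [DecidableEq ι]
    (μ : Measure Ω) (X : ι → Ω → ℝ) : ℝ :=
  ∑ pa ∈ diversePartitions ι, tauWeight pa * (pa.map (blockMoment μ X)).prod

/-- The form `τ̄`, defined like `τ` but with the sum restricted to diverse partitions all of
whose blocks have size greater than one. -/
noncomputable def tauBarForm {Ω ι : Type*} [MeasurableSpace Ω] [Fintype ι] [DecidableEq ι]
    (μ : Measure Ω) (X : ι → Ω → ℝ) : ℝ :=
  ∑ pa ∈ (diversePartitions ι).filter (fun pa => ∀ B ∈ pa, 1 < Multiset.card B),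
    tauWeight pa * (pa.map (blockMoment μ X)).prod

section Aux

open Multiset

variable {ι : Type*} [Fintype ι] [DecidableEq ι]

lemma partition_sum_indicator {P : Finset (Finset ι)} (hP : IsPartitionOf P) (x : ι) :
    ∑ B ∈ P, (if x ∈ B then 1 else 0 : ℕ) = 1 := by
  obtain ⟨B₀, ⟨hB₀P, hxB₀⟩, huniq⟩ := hP.2 x
  rw [Finset.sum_eq_single_of_mem B₀ hB₀P]
  · simp [hxB₀]
  · intro B hBP hne
    simp only [ite_eq_right_iff]
    intro hxB
    exact (hne (huniq B ⟨hBP, hxB⟩)).elim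

lemma filter_fst_eq (i : ι) :
    (Finset.univ.filter fun a : ι × Bool => i = a.1) = {(i, false), (i, true)} := by
  ext ⟨j, b⟩
  cases b <;> simp [eq_comm, Prod.ext_iff]

lemma diverse_count_sum {pa : Multiset (Multiset ι)} (hpa : pa ∈ diversePartitions ι) (i : ι) :
    (pa.map fun B => B.count i).sum = 2 := by
  simp only [diversePartitions, Finset.mem_image, Finset.mem_filter, Finset.mem_univ,
    true_and] at hpa
  obtain ⟨P, ⟨hP, -⟩, rfl⟩ := hpa
  rw [Multiset.map_map]
  have : ∀ B : Finset (ι × Bool),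
      (Multiset.count i (B.val.map Prod.fst)) = ∑ a ∈ B, (if i = a.1 then 1 else 0 : ℕ) := by
    intro B
    rw [Multiset.count_map]
    rw [show Multiset.filter (fun a => i = a.1) B.val = (B.filter fun a => i = a.1).val from rfl]
    rw [← Finset.card_def, Finset.card_filter]
  calc (P.val.map fun B => Multiset.count i (B.val.map Prod.fst)).sum
      = ∑ B ∈ P, ∑ a ∈ B, (if i = a.1 then 1 else 0 : ℕ) := by
        rw [Finset.sum]
        exact congrArg Multiset.sum (Multiset.map_congr rfl fun B _ => this B)
    _ = ∑ B ∈ P, ∑ a : ι × Bool, (if a ∈ B then (if i = a.1 then 1 else 0) else 0 : ℕ) := by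
        refine Finset.sum_congr rfl fun B _ => ?_
        rw [Finset.sum_ite_mem, Finset.univ_inter]
    _ = ∑ a : ι × Bool, ∑ B ∈ P, (if a ∈ B then (if i = a.1 then 1 else 0) else 0 : ℕ) :=
        Finset.sum_comm
    _ = ∑ a : ι × Bool, (if i = a.1 then 1 else 0 : ℕ) := by
        refine Finset.sum_congr rfl fun a _ => ?_
        by_cases h : i = a.1
        · simp only [h, if_true]
          exact partition_sum_indicator hP a
        · simp [h]
    _ = 2 := by
        rw [← Finset.card_filter, filter_fst_eq]
        simp

lemma diverse_nodup {pa : Multiset (Multiset ι)} (hpa : pa ∈ diversePartitions ι)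
    {B : Multiset ι} (hB : B ∈ pa) : B.Nodup := by
  simp only [diversePartitions, Finset.mem_image, Finset.mem_filter, Finset.mem_univ,
    true_and] at hpa
  obtain ⟨P, ⟨-, hdiv⟩, rfl⟩ := hpa
  rw [Multiset.mem_map] at hB
  obtain ⟨C, hC, rfl⟩ := hB
  refine Multiset.Nodup.map_on ?_ C.nodup
  rintro ⟨i, b⟩ hx ⟨j, c⟩ hy (h : i = j)
  subst h
  rcases Bool.eq_false_or_eq_true b with rfl | rfl <;>
    rcases Bool.eq_false_or_eq_true c with rfl | rfl
  · rfl
  · exact ((hdiv C hC i) ⟨hy, hx⟩).elim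
  · exact ((hdiv C hC i) ⟨hx, hy⟩).elim
  · rfl

lemma diverse_count_le {pa : Multiset (Multiset ι)} (hpa : pa ∈ diversePartitions ι)
    {B : Multiset ι} (hB : B ∈ pa) (i : ι) : B.count i ≤ 1 :=
  Multiset.nodup_iff_count_le_one.mp (diverse_nodup hpa hB) i

lemma exists_two_blocks {i : ι} {pa : Multiset (Multiset ι)}
    (h2 : (pa.map fun B => B.count i).sum = 2)
    (h1 : ∀ B ∈ pa, Multiset.count i B ≤ 1) :
    ∃ B₁ B₂ rest, pa = B₁ ::ₘ B₂ ::ₘ rest ∧ Multiset.count i B₁ = 1 ∧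
      Multiset.count i B₂ = 1 ∧ ∀ B ∈ rest, Multiset.count i B = 0 := by
  have hex : ∃ B₁ ∈ pa, Multiset.count i B₁ ≠ 0 := by
    by_contra h
    push_neg at h
    rw [Multiset.sum_eq_zero] at h2
    · exact two_ne_zero h2.symm
    · intro x hx
      rw [Multiset.mem_map] at hx
      obtain ⟨B, hB, rfl⟩ := hx
      exact h B hB
  obtain ⟨B₁, hB₁, hc₁⟩ := hex
  have hc₁' : Multiset.count i B₁ = 1 := le_antisymm (h1 B₁ hB₁) (Nat.one_le_iff_ne_zero.2 hc₁)
  obtain ⟨pa₁, rfl⟩ := Multiset.exists_cons_of_mem hB₁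
  rw [Multiset.map_cons, Multiset.sum_cons, hc₁'] at h2
  have h2' : (pa₁.map fun B => B.count i).sum = 1 := by omega
  have hex₂ : ∃ B₂ ∈ pa₁, Multiset.count i B₂ ≠ 0 := by
    by_contra h
    push_neg at h
    rw [Multiset.sum_eq_zero] at h2'
    · exact one_ne_zero h2'.symm
    · intro x hx
      rw [Multiset.mem_map] at hx
      obtain ⟨B, hB, rfl⟩ := hx
      exact h B hB
  obtain ⟨B₂, hB₂, hc₂⟩ := hex₂
  have hc₂' : Multiset.count i B₂ = 1 :=
    le_antisymm (h1 B₂ (Multiset.mem_cons_of_mem hB₂)) (Nat.one_le_iff_ne_zero.2 hc₂)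
  obtain ⟨rest, rfl⟩ := Multiset.exists_cons_of_mem hB₂
  rw [Multiset.map_cons, Multiset.sum_cons, hc₂'] at h2'
  have h2'' : (rest.map fun B => B.count i).sum = 0 := by omega
  refine ⟨B₁, B₂, rest, rfl, hc₁', hc₂', fun B hB => ?_⟩
  have : Multiset.count i B ≤ (rest.map fun B => B.count i).sum :=
    Multiset.le_sum_of_mem (Multiset.mem_map_of_mem _ hB)
  omega

end Aux
section Aux2

variable {Ω : Type*} [mΩ : MeasurableSpace Ω] {μ : Measure Ω}
  {n : ℕ} (X : Fin (n + 1) → Ω → ℝ) (X' : Ω → ℝ)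

lemma multiset_prod_eq_prod_pow (B : Multiset (Fin (n + 1))) (ω : Ω) :
    (B.map fun i => X i ω).prod = ∏ i, X i ω ^ B.count i := by
  rw [Finset.prod_multiset_map_count B (fun i => X i ω)]
  refine (Finset.prod_subset (f := fun i => X i ω ^ B.count i) (Finset.subset_univ _) fun i _ hi => ?_)
  rw [Multiset.count_eq_zero_of_notMem (by simpa using hi), pow_zero]

lemma int_X0 (hmom : ∀ (f : Fin (n + 1) → ℕ) (k : ℕ),
      Integrable (fun ω => (∏ i, X i ω ^ f i) * X' ω ^ k) μ)
    (B₀ : Multiset (Fin (n + 1))) :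
    Integrable (fun ω => X 0 ω * (B₀.map fun i => X i ω).prod) μ := by
  have : (fun ω => X 0 ω * (B₀.map fun i => X i ω).prod)
      = fun ω => (∏ i, X i ω ^ (B₀.count i + if i = 0 then 1 else 0)) * X' ω ^ 0 := by
    funext ω
    rw [multiset_prod_eq_prod_pow]
    simp only [pow_add, Finset.prod_mul_distrib, pow_zero, mul_one]
    rw [show (∏ i, X i ω ^ if i = 0 then 1 else 0) = ∏ i, if i = 0 then X i ω else 1 by
      refine Finset.prod_congr rfl fun i _ => ?_; split_ifs <;> simp]
    rw [Finset.prod_ite_eq' Finset.univ 0 (fun i => X i ω), if_pos (Finset.mem_univ _)]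
    ring
  rw [this]
  exact hmom _ 0

lemma int_X' (hmom : ∀ (f : Fin (n + 1) → ℕ) (k : ℕ),
      Integrable (fun ω => (∏ i, X i ω ^ f i) * X' ω ^ k) μ)
    (B₀ : Multiset (Fin (n + 1))) :
    Integrable (fun ω => X' ω * (B₀.map fun i => X i ω).prod) μ := by
  have : (fun ω => X' ω * (B₀.map fun i => X i ω).prod)
      = fun ω => (∏ i, X i ω ^ B₀.count i) * X' ω ^ 1 := by
    funext ω
    rw [multiset_prod_eq_prod_pow]
    ring
  rw [this]
  exact hmom _ 1

lemma blockMoment_update_of_count_zero {Y : Ω → ℝ} {B : Multiset (Fin (n + 1))}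
    (hB : B.count 0 = 0) :
    blockMoment μ (Function.update X 0 Y) B = blockMoment μ X B := by
  unfold blockMoment
  refine integral_congr_ae (Filter.Eventually.of_forall fun ω => ?_)
  refine congrArg Multiset.prod (Multiset.map_congr rfl fun i hi => ?_)
  have h : i ≠ 0 := fun h => by rw [Multiset.count_eq_zero] at hB; exact hB (h ▸ hi)
  rw [Function.update_of_ne h]

lemma blockMoment_update_split {Y : Ω → ℝ} {B : Multiset (Fin (n + 1))}
    (hB : B.count 0 = 1) :
    blockMoment μ (Function.update X 0 Y) B
      = ∫ ω, Y ω * ((B.erase 0).map fun i => X i ω).prod ∂μ := by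
  have h0 : (0 : Fin (n + 1)) ∈ B := by rw [← Multiset.count_pos]; omega
  have hne : (B.erase 0).count 0 = 0 := by rw [Multiset.count_erase_self]; omega
  unfold blockMoment
  refine integral_congr_ae (Filter.Eventually.of_forall fun ω => ?_)
  dsimp only
  conv_lhs => rw [← Multiset.cons_erase h0, Multiset.map_cons, Multiset.prod_cons]
  rw [Function.update_self]
  congr 1
  refine congrArg Multiset.prod (Multiset.map_congr rfl fun i hi => ?_)
  have h : i ≠ 0 := fun h => by rw [Multiset.count_eq_zero] at hne; exact hne (h ▸ hi)
  rw [Function.update_of_ne h]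

end Aux2
section Aux3

variable {Ω : Type*} [mΩ : MeasurableSpace Ω] {μ : Measure Ω}
  {n : ℕ} (X : Fin (n + 1) → Ω → ℝ) (X' : Ω → ℝ)

lemma key_partition
    (hmom : ∀ (f : Fin (n + 1) → ℕ) (k : ℕ),
      Integrable (fun ω => (∏ i, X i ω ^ f i) * X' ω ^ k) μ)
    {pa : Multiset (Multiset (Fin (n + 1)))}
    (hpa : pa ∈ diversePartitions (Fin (n + 1))) :
    (pa.map (blockMoment μ (Function.update X 0 fun ω => X 0 ω + X' ω))).prod
      + (pa.map (blockMoment μ (Function.update X 0 fun ω => X 0 ω - X' ω))).prod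
    = 2 * (pa.map (blockMoment μ X)).prod
      + 2 * (pa.map (blockMoment μ (Function.update X 0 X'))).prod := by
  obtain ⟨B₁, B₂, rest, rfl, h₁, h₂, h₀⟩ :=
    exists_two_blocks (diverse_count_sum hpa 0) fun B hB => diverse_count_le hpa hB 0
  have hrest : ∀ Y : Ω → ℝ,
      (rest.map (blockMoment μ (Function.update X 0 Y))).prod
        = (rest.map (blockMoment μ X)).prod := fun Y =>
    congrArg Multiset.prod (Multiset.map_congr rfl fun B hB =>
      blockMoment_update_of_count_zero X (h₀ B hB))
  have split : ∀ Y : Ω → ℝ, ∀ B : Multiset (Fin (n + 1)), B.count 0 = 1 →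
      blockMoment μ (Function.update X 0 Y) B
        = ∫ ω, Y ω * ((B.erase 0).map fun i => X i ω).prod ∂μ :=
    fun Y B hB => blockMoment_update_split X hB
  have splitX : ∀ B : Multiset (Fin (n + 1)), B.count 0 = 1 →
      blockMoment μ X B = ∫ ω, X 0 ω * ((B.erase 0).map fun i => X i ω).prod ∂μ := by
    intro B hB
    calc blockMoment μ X B = blockMoment μ (Function.update X 0 (X 0)) B := by
          rw [Function.update_eq_self]
      _ = _ := split (X 0) B hB
  have eadd : ∀ B : Multiset (Fin (n + 1)), B.count 0 = 1 →
      blockMoment μ (Function.update X 0 fun ω => X 0 ω + X' ω) B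
        = (∫ ω, X 0 ω * ((B.erase 0).map fun i => X i ω).prod ∂μ)
          + ∫ ω, X' ω * ((B.erase 0).map fun i => X i ω).prod ∂μ := by
    intro B hB
    rw [split _ _ hB, ← integral_add (int_X0 X X' hmom _) (int_X' X X' hmom _)]
    congr 1
    funext ω
    ring
  have esub : ∀ B : Multiset (Fin (n + 1)), B.count 0 = 1 →
      blockMoment μ (Function.update X 0 fun ω => X 0 ω - X' ω) B
        = (∫ ω, X 0 ω * ((B.erase 0).map fun i => X i ω).prod ∂μ)
          - ∫ ω, X' ω * ((B.erase 0).map fun i => X i ω).prod ∂μ := by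
    intro B hB
    rw [split _ _ hB, ← integral_sub (int_X0 X X' hmom _) (int_X' X X' hmom _)]
    congr 1
    funext ω
    ring
  simp only [Multiset.map_cons, Multiset.prod_cons, hrest]
  rw [eadd _ h₁, eadd _ h₂, esub _ h₁, esub _ h₂, splitX _ h₁, splitX _ h₂,
    split X' _ h₁, split X' _ h₂]
  ring

end Aux3

/-- **The form `τ` is quadratic in each argument**: for random variables
`X₁, X₁', X₂, …, Xₙ` (with finite moments of all orders),
`2 τ(X₁, X₂,…,Xₙ) + 2 τ(X₁', X₂,…,Xₙ) = τ(X₁ + X₁', X₂,…,Xₙ) + τ(X₁ - X₁', X₂,…,Xₙ)`.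
(By symmetry of `τ` it suffices to state this for the first argument.) -/
theorem tauForm_quadratic
    {Ω : Type*} [mΩ : MeasurableSpace Ω] {μ : Measure Ω} [IsProbabilityMeasure μ]
    {n : ℕ} (X : Fin (n + 1) → Ω → ℝ) (X' : Ω → ℝ)
    (hmom : ∀ (f : Fin (n + 1) → ℕ) (k : ℕ),
      Integrable (fun ω => (∏ i, X i ω ^ f i) * X' ω ^ k) μ) :
    2 * tauForm μ X + 2 * tauForm μ (Function.update X 0 X')
      = tauForm μ (Function.update X 0 (fun ω => X 0 ω + X' ω))
        + tauForm μ (Function.update X 0 (fun ω => X 0 ω - X' ω)) := by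
  simp only [tauForm]
  rw [Finset.mul_sum, Finset.mul_sum, ← Finset.sum_add_distrib, ← Finset.sum_add_distrib]
  refine Finset.sum_congr rfl fun pa hpa => ?_
  have h := key_partition X X' hmom hpa
  linear_combination (-(tauWeight pa)) * h
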